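/- arXiv:1610.01911 — 2 statements merged into one kernel-verified Lean document; each statement's English description precedes it below -/
import Mathlib

section
/- For the simple random walk on the torus ℤ/Lℤ (L ∈ ℕ, L ≥ 2), the Green function G_x(z) = Σ_{l∈ℕ₀} q_l(x) z^l satisfies G_x(z) = (y(z)^x + y(z)^{L-x})/(1 - y(z)^L) · (1-z²)^{-1/2} for x ∈ {0,1,...,L-1} and 0 < |z| < 1, where y(z) = (1-(1-z²)^{1/2})/z. -/
open scoped BigOperators

/-- `l`-step transition probability of simple random walk on `ℤ` from `0` to `x`. -/
noncomputable def srwZ (l : ℕ) (x : ℤ) : ℝ :=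
  if Even ((l : ℤ) + x) ∧ x.natAbs ≤ l then
    (l.choose (((l : ℤ) + x).toNat / 2) : ℝ) * ((2 : ℝ)⁻¹) ^ l
  else 0

lemma srwZ_nonneg (l : ℕ) (x : ℤ) : 0 ≤ srwZ l x := by
  unfold srwZ; split
  · positivity
  · exact le_refl _

lemma srwZ_le_one (l : ℕ) (x : ℤ) : srwZ l x ≤ 1 := by
  unfold srwZ; split
  · have h : (l.choose (((l : ℤ) + x).toNat / 2)) ≤ 2 ^ l := by
      rcases le_or_gt (((l : ℤ) + x).toNat / 2) l with h | h
      · calc l.choose (((l : ℤ) + x).toNat / 2)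
            ≤ ∑ m ∈ Finset.range (l+1), l.choose m :=
              Finset.single_le_sum (f := fun m => l.choose m) (fun _ _ => Nat.zero_le _)
                (Finset.mem_range.mpr (Nat.lt_succ_of_le h))
          _ = 2 ^ l := Nat.sum_range_choose l
      · rw [Nat.choose_eq_zero_of_lt h]; exact Nat.zero_le _
    calc ((l.choose (((l : ℤ) + x).toNat / 2)) : ℝ) * ((2:ℝ)⁻¹) ^ l
        ≤ (2 ^ l : ℝ) * ((2:ℝ)⁻¹) ^ l := by
          apply mul_le_mul_of_nonneg_right _ (by positivity)
          exact_mod_cast h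
      _ = 1 := by rw [← mul_pow]; norm_num
  · norm_num


lemma srwZ_zero (x : ℤ) : srwZ 0 x = if x = 0 then 1 else 0 := by
  unfold srwZ
  by_cases h : x = 0
  · subst h; simp
  · rw [if_neg, if_neg h]
    rintro ⟨-, h2⟩
    simp only [Nat.le_zero, Int.natAbs_eq_zero] at h2
    exact h h2

lemma srwZ_eq (l : ℕ) (x : ℤ) : srwZ l x =
    if ((l : ℤ) + x) % 2 = 0 ∧ x.natAbs ≤ l then
      (l.choose (((l : ℤ) + x).toNat / 2) : ℝ) * ((2 : ℝ)⁻¹) ^ l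
    else 0 := by
  simp [srwZ, Int.even_iff]

lemma srwZ_rec (l : ℕ) (x : ℤ) :
    srwZ (l + 1) x = (srwZ l (x - 1) + srwZ l (x + 1)) / 2 := by
  rw [srwZ_eq, srwZ_eq, srwZ_eq]
  push_cast
  split_ifs with h1 h2 h3 h3' h2' h3'' h3''' <;>
    first
    | (exfalso; omega)
    | skip
  · -- interior Pascal case
    have e1 : ((l : ℤ) + 1 + x).toNat / 2 = ((l : ℤ) + (x - 1)).toNat / 2 + 1 := by omega
    have e2 : ((l : ℤ) + (x + 1)).toNat / 2 = ((l : ℤ) + (x - 1)).toNat / 2 + 1 := by omega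
    rw [e1, e2, Nat.choose_succ_succ']
    push_cast
    rw [pow_succ]
    ring
  · -- x = l + 1
    have e1 : ((l : ℤ) + 1 + x).toNat / 2 = l + 1 := by omega
    have e2 : ((l : ℤ) + (x - 1)).toNat / 2 = l := by omega
    rw [e1, e2, Nat.choose_self, Nat.choose_self]
    push_cast
    rw [pow_succ]
    ring
  · -- x = -(l + 1)
    have e1 : ((l : ℤ) + 1 + x).toNat / 2 = 0 := by omega
    have e2 : ((l : ℤ) + (x + 1)).toNat / 2 = 0 := by omega
    rw [e1, e2, Nat.choose_zero_right, Nat.choose_zero_right]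
    push_cast
    rw [pow_succ]
    ring
  · norm_num

lemma srwZ_eq_zero_of_lt (l : ℕ) (x : ℤ) (h : l < x.natAbs) : srwZ l x = 0 := by
  unfold srwZ
  rw [if_neg]
  rintro ⟨-, h2⟩
  omega

lemma srwZ_shift_zero (L l : ℕ) (hL : 1 ≤ L) (x k : ℤ)
    (hk : l + x.natAbs < k.natAbs) : srwZ l (x + k * L) = 0 := by
  apply srwZ_eq_zero_of_lt
  have t : (k * (L : ℤ)).natAbs = k.natAbs * L := by
    rw [Int.natAbs_mul]; simp
  have tri : (k * (L : ℤ)).natAbs ≤ (x + k * L).natAbs + x.natAbs := by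
    have := Int.natAbs_add_le (x + k * L) (-x)
    simpa using this
  have hle : k.natAbs ≤ k.natAbs * L := Nat.le_mul_of_pos_right _ (by omega)
  omega

noncomputable def q (L : ℕ) (l : ℕ) (x : ℤ) : ℝ := ∑' k : ℤ, srwZ l (x + k * L)

lemma summable_q (L l : ℕ) (hL : 1 ≤ L) (x : ℤ) :
    Summable (fun k : ℤ => srwZ l (x + k * L)) := by
  apply summable_of_ne_finset_zero (s := Finset.Icc (-(l + x.natAbs) : ℤ) (l + x.natAbs))
  intro k hk
  simp only [Finset.mem_Icc, not_and, not_le] at hk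
  apply srwZ_shift_zero L l hL
  omega

lemma q_nonneg (L l : ℕ) (x : ℤ) : 0 ≤ q L l x :=
  tsum_nonneg fun k => srwZ_nonneg l _

lemma q_le (L l : ℕ) (hL : 1 ≤ L) (x : ℤ) :
    q L l x ≤ 2 * l + 2 * x.natAbs + 1 := by
  have hsupp : ∀ k : ℤ, k ∉ Finset.Icc (-(l + x.natAbs) : ℤ) (l + x.natAbs) →
      srwZ l (x + k * L) = 0 := by
    intro k hk
    simp only [Finset.mem_Icc, not_and, not_le] at hk
    apply srwZ_shift_zero L l hL
    omega
  rw [q, tsum_eq_sum hsupp]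
  calc ∑ k ∈ Finset.Icc (-(l + x.natAbs) : ℤ) (l + x.natAbs), srwZ l (x + k * L)
      ≤ ∑ k ∈ Finset.Icc (-(l + x.natAbs) : ℤ) (l + x.natAbs), 1 :=
        Finset.sum_le_sum fun k _ => srwZ_le_one l _
    _ ≤ 2 * l + 2 * x.natAbs + 1 := by
        rw [Finset.sum_const, Int.card_Icc]
        have : ((l : ℤ) + x.natAbs + 1 - -((l : ℤ) + x.natAbs)).toNat
            = 2 * l + 2 * x.natAbs + 1 := by omega
        rw [this]; push_cast; norm_num

lemma q_rec (L l : ℕ) (hL : 1 ≤ L) (x : ℤ) :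
    q L (l + 1) x = (q L l (x - 1) + q L l (x + 1)) / 2 := by
  unfold q
  have h1 : ∀ k : ℤ, srwZ (l + 1) (x + k * L)
      = (srwZ l ((x - 1) + k * L) + srwZ l ((x + 1) + k * L)) / 2 := by
    intro k
    rw [srwZ_rec]
    ring_nf
  simp_rw [h1]
  rw [tsum_div_const, Summable.tsum_add (summable_q L l hL (x-1)) (summable_q L l hL (x+1))]

lemma q_periodic (L l : ℕ) (x : ℤ) : q L l (x + L) = q L l x := by
  unfold q
  rw [← (Equiv.addRight (1 : ℤ)).tsum_eq (fun k => srwZ l (x + k * L))]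
  apply tsum_congr
  intro k
  simp only [Equiv.coe_addRight]
  ring_nf

lemma q_zero (L : ℕ) (hL : 1 ≤ L) (x : ℤ) :
    q L 0 x = if (L : ℤ) ∣ x then 1 else 0 := by
  unfold q
  by_cases h : (L : ℤ) ∣ x
  · obtain ⟨c, hc⟩ := h
    have h1 : ∀ k : ℤ, srwZ 0 (x + k * L) = if k = -c then 1 else 0 := by
      intro k
      rw [srwZ_zero]
      apply if_congr _ rfl rfl
      constructor
      · intro h'
        have : (c + k) * L = 0 := by rw [add_mul]; linear_combination h' - hc
        have hL' : (L : ℤ) ≠ 0 := by positivity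
        have := mul_eq_zero.mp this
        omega
      · rintro rfl
        rw [hc]; ring
    simp_rw [h1]
    rw [if_pos ⟨c, hc⟩, tsum_ite_eq]
  · have h1 : ∀ k : ℤ, srwZ 0 (x + k * L) = 0 := by
      intro k
      rw [srwZ_zero, if_neg]
      intro h'
      exact h ⟨-k, by linarith⟩
    simp_rw [h1]
    rw [if_neg h]
    exact tsum_zero

noncomputable def G (L : ℕ) (z : ℝ) (x : ℤ) : ℝ := ∑' l : ℕ, q L l x * z ^ l

lemma summable_G (L : ℕ) (hL : 1 ≤ L) (z : ℝ) (hz1 : |z| < 1) (x : ℤ) :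
    Summable (fun l : ℕ => q L l x * z ^ l) := by
  have h1 : Summable (fun l : ℕ => (l : ℝ) * |z| ^ l) := by
    simpa using summable_pow_mul_geometric_of_norm_lt_one 1
      (r := |z|) (by rwa [Real.norm_eq_abs, abs_abs])
  have h2 : Summable (fun l : ℕ => |z| ^ l) :=
    summable_geometric_of_lt_one (abs_nonneg z) hz1
  have hmaj : Summable (fun l : ℕ =>
      2 * ((l : ℝ) * |z| ^ l) + (2 * x.natAbs + 1) * |z| ^ l) :=
    (h1.mul_left 2).add (h2.mul_left _)
  apply Summable.of_norm_bounded hmaj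
  intro l
  rw [norm_mul, Real.norm_eq_abs, Real.norm_eq_abs, abs_pow,
    abs_of_nonneg (q_nonneg L l x)]
  have := mul_le_mul_of_nonneg_right (q_le L l hL x)
    (pow_nonneg (abs_nonneg z) l)
  calc q L l x * |z| ^ l ≤ (2 * l + 2 * x.natAbs + 1) * |z| ^ l := this
    _ = 2 * ((l : ℝ) * |z| ^ l) + (2 * x.natAbs + 1) * |z| ^ l := by ring

lemma G_periodic (L : ℕ) (z : ℝ) (x : ℤ) : G L z (x + L) = G L z x :=
  tsum_congr fun l => by rw [q_periodic]

lemma G_rec (L : ℕ) (hL : 1 ≤ L) (z : ℝ) (hz1 : |z| < 1) (x : ℤ) :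
    G L z x = (if (L : ℤ) ∣ x then 1 else 0) + z / 2 * (G L z (x - 1) + G L z (x + 1)) := by
  unfold G
  rw [Summable.tsum_eq_zero_add (summable_G L hL z hz1 x)]
  have h0 : q L 0 x * z ^ 0 = (if (L : ℤ) ∣ x then 1 else 0) := by
    rw [q_zero L hL, pow_zero, mul_one]
  have hstep : ∀ l : ℕ, q L (l + 1) x * z ^ (l + 1)
      = z / 2 * (q L l (x - 1) * z ^ l) + z / 2 * (q L l (x + 1) * z ^ l) := by
    intro l
    rw [q_rec L l hL, pow_succ]
    ring
  simp_rw [hstep]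
  rw [Summable.tsum_add ((summable_G L hL z hz1 (x - 1)).mul_left _)
      ((summable_G L hL z hz1 (x + 1)).mul_left _),
    tsum_mul_left, tsum_mul_left, h0]
  ring

noncomputable def rfun (L : ℕ) (y w : ℝ) (n : ℕ) : ℝ :=
  (y ^ n + y ^ (L - n)) / (1 - y ^ L) / w

noncomputable def Rfun (L : ℕ) (y w : ℝ) (t : ℤ) : ℝ :=
  rfun L y w ((t % L).toNat)

section Alg
variable (L : ℕ) (z y w : ℝ) (hL : 2 ≤ L)
  (hzy : z * y = 1 - w) (hyw : y * (1 + w) = z)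
  (hD : 1 - y ^ L ≠ 0) (hw : w ≠ 0)

-- key identity z(1+y²)=2y
lemma key_id (hzy : z * y = 1 - w) (hyw : y * (1 + w) = z) :
    z * (1 + y ^ 2) = 2 * y := by
  linear_combination y * hzy - hyw

include hzy hyw hD hw hL

lemma r_interior (n : ℕ) (h1 : 1 ≤ n) (h2 : n ≤ L - 1) :
    rfun L y w n = z / 2 * (rfun L y w (n - 1) + rfun L y w (n + 1)) := by
  have key := key_id z y w hzy hyw
  obtain ⟨a, rfl⟩ : ∃ a, n = a + 1 := ⟨n - 1, by omega⟩
  obtain ⟨b, hb⟩ : ∃ b, L = a + b + 2 := ⟨L - a - 2, by omega⟩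
  subst hb
  have e1 : a + 1 - 1 = a := by omega
  have e2 : a + b + 2 - (a + 1) = b + 1 := by omega
  have e3 : a + b + 2 - a = b + 2 := by omega
  have e4 : a + b + 2 - (a + 1 + 1) = b := by omega
  have hN : y ^ (a + 1) + y ^ (b + 1)
      = z / 2 * ((y ^ a + y ^ (b + 2)) + (y ^ (a + 1 + 1) + y ^ b)) := by
    linear_combination (-(y ^ a + y ^ b) / 2) * key
  unfold rfun
  rw [e1, e2, e3, e4]
  rw [← add_div, ← add_div, ← mul_div_assoc, ← mul_div_assoc, hN]

lemma r_boundary :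
    rfun L y w 0 = 1 + z / 2 * (rfun L y w (L - 1) + rfun L y w 1) := by
  obtain ⟨c, hc⟩ : ∃ c, L = c + 2 := ⟨L - 2, by omega⟩
  subst hc
  have e1 : c + 2 - 1 = c + 1 := by omega
  have e2 : c + 2 - (c + 1) = 1 := by omega
  have e3 : c + 2 - 0 = c + 2 := by omega
  have hN : (1 + y ^ (c + 2)) - z / 2 * ((y ^ (c + 1) + y ^ 1) + (y ^ 1 + y ^ (c + 1)))
      = (1 - y ^ (c + 2)) * w := by
    linear_combination (-1 : ℝ) * hzy + y ^ (c + 1) * hyw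
  unfold rfun
  rw [e1, e2, e3, pow_zero]
  have hdw : (1 - y ^ (c + 2)) * w ≠ 0 := mul_ne_zero hD hw
  simp only [div_div]
  rw [← add_div, ← mul_div_assoc]
  apply eq_add_of_sub_eq
  rw [div_sub_div_same, hN, div_self hdw]

end Alg

section Emod
variable (L : ℕ) (hL : 2 ≤ L) (t : ℤ)

lemma emod_add_one (hL : 2 ≤ L) :
    (t + 1) % L = if t % L = (L : ℤ) - 1 then 0 else t % L + 1 := by
  have hL' : (1 : ℤ) < L := by exact_mod_cast hL
  have h1 : (1 : ℤ) % L = 1 := Int.emod_eq_of_lt (by norm_num) hL'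
  rw [Int.add_emod, h1]
  have hm0 : 0 ≤ t % L := Int.emod_nonneg t (by positivity)
  have hm1 : t % L < L := Int.emod_lt_of_pos t (by positivity)
  split_ifs with h
  · rw [h]
    simp
  · exact Int.emod_eq_of_lt (by omega) (by omega)

lemma emod_sub_one (hL : 2 ≤ L) :
    (t - 1) % L = if t % L = 0 then (L : ℤ) - 1 else t % L - 1 := by
  have hL' : (1 : ℤ) < L := by exact_mod_cast hL
  have h1 : (1 : ℤ) % L = 1 := Int.emod_eq_of_lt (by norm_num) hL'
  rw [Int.sub_emod, h1]
  have hm0 : 0 ≤ t % L := Int.emod_nonneg t (by positivity)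
  have hm1 : t % L < L := Int.emod_lt_of_pos t (by positivity)
  split_ifs with h
  · rw [h]
    have e : ((-1 : ℤ) + L * 1) % L = (-1) % L := by
      apply Int.add_mul_emod_self_left
    have e2 : ((-1 : ℤ) + L * 1) % L = (L : ℤ) - 1 := by
      rw [show ((-1 : ℤ) + L * 1) = (L : ℤ) - 1 by ring]
      exact Int.emod_eq_of_lt (by omega) (by omega)
    rw [show ((0 : ℤ) - 1) = -1 by ring]
    omega
  · exact Int.emod_eq_of_lt (by omega) (by omega)

end Emod

lemma rfun_L_eq (L : ℕ) (y w : ℝ) : rfun L y w L = rfun L y w 0 := by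
  unfold rfun
  rw [Nat.sub_self, Nat.sub_zero, pow_zero, add_comm]

lemma R_rec (L : ℕ) (z y w : ℝ) (hL : 2 ≤ L)
    (hzy : z * y = 1 - w) (hyw : y * (1 + w) = z)
    (hD : 1 - y ^ L ≠ 0) (hw : w ≠ 0) (t : ℤ) :
    Rfun L y w t = (if (L : ℤ) ∣ t then 1 else 0)
      + z / 2 * (Rfun L y w (t - 1) + Rfun L y w (t + 1)) := by
  have hm0 : 0 ≤ t % L := Int.emod_nonneg t (by positivity)
  have hm1 : t % L < L := Int.emod_lt_of_pos t (by positivity)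
  have hdvd : (L : ℤ) ∣ t ↔ t % L = 0 := Int.dvd_iff_emod_eq_zero
  unfold Rfun
  rw [emod_add_one L t hL, emod_sub_one L t hL]
  by_cases h0 : t % L = 0
  · rw [h0, if_pos (hdvd.mpr h0)]
    have hne : ¬ ((0 : ℤ) = L - 1) := by omega
    rw [if_pos rfl, if_neg (h0 ▸ hne)]
    have e1 : ((0 : ℤ)).toNat = 0 := rfl
    have e2 : ((L : ℤ) - 1).toNat = L - 1 := by omega
    have e3 : ((0 : ℤ) + 1).toNat = 1 := rfl
    rw [e1, e2, e3]
    exact r_boundary L z y w hL hzy hyw hD hw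
  · rw [if_neg (fun h => h0 (hdvd.mp h)), if_neg h0, zero_add]
    set m := t % L with hm
    have e1 : (m - 1).toNat = m.toNat - 1 := by omega
    have hnlb : 1 ≤ m.toNat := by omega
    have hnub : m.toNat ≤ L - 1 := by omega
    by_cases htop : m = L - 1
    · rw [if_pos htop]
      have e2 : ((0 : ℤ)).toNat = 0 := rfl
      rw [e1, e2]
      have : m.toNat + 1 = L := by omega
      rw [r_interior L z y w hL hzy hyw hD hw m.toNat hnlb hnub, this, rfun_L_eq]
    · rw [if_neg htop]
      have e2 : (m + 1).toNat = m.toNat + 1 := by omega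
      rw [e1, e2]
      exact r_interior L z y w hL hzy hyw hD hw m.toNat hnlb hnub

lemma unique_fix (L : ℕ) (hL : 2 ≤ L) (z : ℝ) (hz1 : |z| < 1) (d : ℤ → ℝ)
    (hper : ∀ t : ℤ, d (t + L) = d t)
    (hrec : ∀ t : ℤ, d t = z / 2 * (d (t - 1) + d (t + 1))) :
    ∀ t : ℤ, d t = 0 := by
  have hshift : ∀ (k t : ℤ), d (t + k * L) = d t := by
    intro k
    induction k using Int.induction_on with
    | zero => simp
    | succ n ih =>
        intro t
        rw [show t + ((n : ℤ) + 1) * L = (t + n * L) + L by ring, hper, ih]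
    | pred n ih =>
        intro t
        rw [show t + (-(n : ℤ) - 1) * L = (t - L) + (-(n : ℤ)) * L by ring, ih,
          ← hper (t - L), sub_add_cancel]
  have hmod : ∀ t : ℤ, d t = d (t % L) := by
    intro t
    conv_lhs => rw [show t = t % L + (t / L) * L by
      rw [mul_comm]; exact (Int.emod_add_mul_ediv t L).symm]
    rw [hshift]
  have hLpos : (0 : ℤ) < L := by positivity
  set s : Finset ℝ := (Finset.range L).image (fun n : ℕ => |d n|) with hs
  have hne : s.Nonempty := ⟨|d 0|, Finset.mem_image.mpr ⟨0, Finset.mem_range.mpr (by omega), rfl⟩⟩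
  set M := s.max' hne with hM
  have hbound : ∀ t : ℤ, |d t| ≤ M := by
    intro t
    rw [hmod t]
    have h0 : 0 ≤ t % L := Int.emod_nonneg t (by positivity)
    have h1 : t % L < L := Int.emod_lt_of_pos t hLpos
    have : t % L = ((t % L).toNat : ℤ) := by omega
    rw [this]
    apply Finset.le_max'
    exact Finset.mem_image.mpr ⟨(t % L).toNat, Finset.mem_range.mpr (by omega), rfl⟩
  obtain ⟨n0, -, hn0⟩ := Finset.mem_image.mp (s.max'_mem hne)
  have hMnn : 0 ≤ M := le_trans (abs_nonneg _) (hbound 0)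
  have hcontr : M ≤ |z| * M := by
    have h1 : M = |z / 2 * (d ((n0 : ℤ) - 1) + d ((n0 : ℤ) + 1))| := by
      rw [hM, ← hn0, ← hrec]
    calc M = |z / 2 * (d ((n0 : ℤ) - 1) + d ((n0 : ℤ) + 1))| := h1
      _
        = |z| / 2 * |d ((n0 : ℤ) - 1) + d ((n0 : ℤ) + 1)| := by
          rw [abs_mul, abs_div]; norm_num
      _ ≤ |z| / 2 * (|d ((n0 : ℤ) - 1)| + |d ((n0 : ℤ) + 1)|) := by
          apply mul_le_mul_of_nonneg_left (abs_add_le _ _) (by positivity)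
      _ ≤ |z| / 2 * (M + M) := by
          apply mul_le_mul_of_nonneg_left (add_le_add (hbound _) (hbound _)) (by positivity)
      _ = |z| * M := by ring
  have hM0 : M ≤ 0 := by nlinarith
  intro t
  have := hbound t
  have : |d t| ≤ 0 := le_trans this hM0
  have := abs_nonneg (d t)
  have : |d t| = 0 := le_antisymm ‹|d t| ≤ 0› ‹0 ≤ |d t|›
  exact abs_eq_zero.mp this

/-- Green function of simple random walk on the torus `ℤ/Lℤ`:
`G_x(z) = (y(z)^x + y(z)^{L-x})/(1-y(z)^L) · (1-z²)^{-1/2}` for `x ∈ {0,…,L-1}`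
and `0 < |z| < 1`, where `y(z) = (1-√(1-z²))/z` and the torus walk is the
periodisation `q_l(x) = Σ_{k∈ℤ} q_l^ℤ(x + kL)`. -/
theorem green_function_srw_torus (L : ℕ) (hL : 2 ≤ L) (x : ℕ) (hx : x < L)
    (z : ℝ) (hz0 : 0 < |z|) (hz1 : |z| < 1) :
    (∑' l : ℕ, (∑' k : ℤ, srwZ l ((x : ℤ) + k * (L : ℤ))) * z ^ l)
      = (((1 - Real.sqrt (1 - z ^ 2)) / z) ^ x + ((1 - Real.sqrt (1 - z ^ 2)) / z) ^ (L - x))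
          / (1 - ((1 - Real.sqrt (1 - z ^ 2)) / z) ^ L) / Real.sqrt (1 - z ^ 2) := by
  have hz : z ≠ 0 := by
    intro h; rw [h] at hz0; simp at hz0
  have hz2 : z ^ 2 < 1 := by
    have h := sq_abs z
    nlinarith [abs_nonneg z]
  have hzsq : 0 < z ^ 2 := by positivity
  set w := Real.sqrt (1 - z ^ 2) with hwdef
  set y := (1 - w) / z with hydef
  have h1z : 0 < 1 - z ^ 2 := by linarith
  have hw0 : 0 < w := Real.sqrt_pos.mpr h1z
  have hw2 : w ^ 2 = 1 - z ^ 2 := Real.sq_sqrt h1z.le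
  have hw1 : w < 1 := by nlinarith
  have hzy : z * y = 1 - w := by
    rw [hydef]; field_simp
  have hyw : y * (1 + w) = z := by
    rw [hydef]; field_simp; linear_combination -hw2
  have hy1 : |y| < 1 := by
    rw [← sq_lt_one_iff_abs_lt_one, hydef, div_pow, div_lt_one (by positivity)]
    nlinarith
  have hyL : y ^ L < 1 := by
    calc y ^ L ≤ |y ^ L| := le_abs_self _
      _ = |y| ^ L := abs_pow y L
      _ < 1 := pow_lt_one₀ (abs_nonneg y) hy1 (by omega)
  have hD : 1 - y ^ L ≠ 0 := by
    have : (0:ℝ) < 1 - y ^ L := by linarith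
    exact this.ne'
  have hL1 : 1 ≤ L := by omega
  set d : ℤ → ℝ := fun t => G L z t - Rfun L y w t with hd
  have hper : ∀ t : ℤ, d (t + L) = d t := by
    intro t
    simp only [hd]
    rw [G_periodic]
    have e : (t + (L:ℤ)) % L = t % L := by
      rw [show t + (L:ℤ) = t + (L:ℤ) * 1 by ring]
      apply Int.add_mul_emod_self_left
    unfold Rfun
    rw [e]
  have hrec : ∀ t : ℤ, d t = z / 2 * (d (t - 1) + d (t + 1)) := by
    intro t
    simp only [hd]
    rw [G_rec L hL1 z hz1 t, R_rec L z y w hL hzy hyw hD hw0.ne' t]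
    ring
  have hzero := unique_fix L hL z hz1 d hper hrec (x : ℤ)
  simp only [hd] at hzero
  have hGx : G L z (x : ℤ) = Rfun L y w (x : ℤ) := by linarith
  have hRx : Rfun L y w (x : ℤ) = (y ^ x + y ^ (L - x)) / (1 - y ^ L) / w := by
    unfold Rfun rfun
    have h1 : (x : ℤ) % L = x := Int.emod_eq_of_lt (by positivity) (by exact_mod_cast hx)
    rw [h1, Int.toNat_natCast]
  show G L z (x : ℤ) = _
  rw [hGx, hRx]
end

section
/- With the same setup (m = (1-μ)², a = (1-μ)ν, b = (1-μ)(1-ν), p = (1-ν)δ_0 + νq on a finite abelian group G), for every x ∈ G: Σ_{k∈ℕ₀} m^k p_{2k}(x) = (1/(2(1-b))) G_x(a/(1-b)) + (1/(2(1+b))) G_x(-a/(1+b)), where p_{2k} is the 2k-fold convolution power of p and G_x(z) = Σ_{l∈ℕ₀} q_l(x) z^l. -/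
open scoped BigOperators

lemma even_extract {b : ℝ} (hb : |b| < 1) (l : ℕ) :
    HasSum (fun k : ℕ => (((2*k + l).choose l : ℕ) : ℝ) * b ^ (2*k))
      ((1/2) * (1/(1-b)^(l+1) + 1/(1+b)^(l+1))) ∧
    HasSum (fun k : ℕ => (((2*k + 1 + l).choose l : ℕ) : ℝ) * b ^ (2*k+1))
      ((1/2) * (1/(1-b)^(l+1) - 1/(1+b)^(l+1))) := by
  have hb' : ‖b‖ < 1 := by simpa [Real.norm_eq_abs] using hb
  have hnb' : ‖-b‖ < 1 := by simpa [Real.norm_eq_abs] using hb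
  set f : ℕ → ℝ := fun n => (((n + l).choose l : ℕ) : ℝ) * b ^ n with hf_def
  have hA : HasSum f (1 / (1 - b) ^ (l + 1)) :=
    hasSum_choose_mul_geometric_of_norm_lt_one l hb'
  have hB : HasSum (fun n => (((n + l).choose l : ℕ) : ℝ) * (-b) ^ n)
      (1 / (1 + b) ^ (l + 1)) := by
    have := hasSum_choose_mul_geometric_of_norm_lt_one (𝕜 := ℝ) l hnb'
    simpa [sub_neg_eq_add] using this
  have hinj2 : Function.Injective (fun k : ℕ => 2 * k) := fun a b h => by dsimp at h; omega
  have hinj2' : Function.Injective (fun k : ℕ => 2 * k + 1) := fun a b h => by dsimp at h; omega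
  have sfe : Summable (fun k : ℕ => f (2 * k)) := hA.summable.comp_injective hinj2
  have sfo : Summable (fun k : ℕ => f (2 * k + 1)) := hA.summable.comp_injective hinj2'
  set E := ∑' k, f (2 * k) with hE
  set O := ∑' k, f (2 * k + 1) with hO
  have h1 : HasSum f (E + O) := sfe.hasSum.even_add_odd sfo.hasSum
  have heq1 : E + O = 1 / (1 - b) ^ (l + 1) := h1.unique hA
  have hge : ∀ k : ℕ, (((2*k + l).choose l : ℕ) : ℝ) * (-b) ^ (2*k) = f (2*k) := by
    intro k
    have : (-b) ^ (2*k) = b ^ (2*k) := by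
      rw [pow_mul, pow_mul, neg_sq]
    simp [f, this]
  have hgo : ∀ k : ℕ, (((2*k+1 + l).choose l : ℕ) : ℝ) * (-b) ^ (2*k+1) = -f (2*k+1) := by
    intro k
    have : (-b) ^ (2*k+1) = -(b ^ (2*k+1)) := Odd.neg_pow ⟨k, by ring⟩ b
    simp [f, this]
  have h2 : HasSum (fun n => (((n + l).choose l : ℕ) : ℝ) * (-b) ^ n) (E + (-O)) := by
    refine HasSum.even_add_odd ?_ ?_
    · convert sfe.hasSum using 1
      exact funext hge
    · convert sfo.hasSum.neg using 1
      · rfl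
      exact funext hgo
  have heq2 : E + (-O) = 1 / (1 + b) ^ (l + 1) := h2.unique hB
  constructor
  · have : E = (1/2) * (1/(1-b)^(l+1) + 1/(1+b)^(l+1)) := by linarith
    exact this ▸ sfe.hasSum
  · have : O = (1/2) * (1/(1-b)^(l+1) - 1/(1+b)^(l+1)) := by linarith
    exact this ▸ sfo.hasSum

lemma two_step_extract {b : ℝ} (hb0 : 0 ≤ b) (hb1 : b < 1) (l : ℕ) :
    HasSum (fun k : ℕ => (((2*k).choose l : ℕ) : ℝ) * b ^ (2*k - l))
      ((1/2) * (1/(1-b)^(l+1) + (-1:ℝ)^l * (1/(1+b)^(l+1)))) := by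
  have hb : |b| < 1 := by rw [abs_of_nonneg hb0]; exact hb1
  rcases Nat.even_or_odd l with ⟨j, hj⟩ | ⟨j, hj⟩
  · -- l = 2j
    have key := (even_extract hb l).1
    have hshift : ∀ k : ℕ, (fun k : ℕ => (((2*k).choose l : ℕ) : ℝ) * b ^ (2*k - l)) (k + j)
        = (((2*k + l).choose l : ℕ) : ℝ) * b ^ (2*k) := by
      intro k
      have h1 : 2 * (k + j) = 2*k + l := by omega
      have h2 : 2 * (k + j) - l = 2*k := by omega
      show (((2*(k+j)).choose l : ℕ) : ℝ) * b ^ (2*(k+j) - l) = _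
      rw [h2, h1]
    have := (hasSum_nat_add_iff (f := fun k : ℕ => (((2*k).choose l : ℕ) : ℝ) * b ^ (2*k - l)) j).1
      ((funext hshift).symm ▸ key)
    have hz : ∑ i ∈ Finset.range j, (((2*i).choose l : ℕ) : ℝ) * b ^ (2*i - l) = 0 := by
      apply Finset.sum_eq_zero
      intro i hi
      rw [Finset.mem_range] at hi
      have : (2*i).choose l = 0 := Nat.choose_eq_zero_of_lt (by omega)
      simp [this]
    rw [hz, add_zero] at this
    have hneg : (-1:ℝ)^l = 1 := by rw [hj]; rw [show j + j = 2*j by ring, pow_mul]; norm_num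
    rw [hneg]; simpa using this
  · -- l = 2j+1
    have key := (even_extract hb l).2
    have hshift : ∀ k : ℕ, (fun k : ℕ => (((2*k).choose l : ℕ) : ℝ) * b ^ (2*k - l)) (k + (j+1))
        = (((2*k + 1 + l).choose l : ℕ) : ℝ) * b ^ (2*k+1) := by
      intro k
      have h1 : 2 * (k + (j+1)) = 2*k + 1 + l := by omega
      have h2 : 2 * (k + (j+1)) - l = 2*k + 1 := by omega
      show (((2*(k+(j+1))).choose l : ℕ) : ℝ) * b ^ (2*(k+(j+1)) - l) = _
      rw [h2, h1]
    have := (hasSum_nat_add_iff (f := fun k : ℕ => (((2*k).choose l : ℕ) : ℝ) * b ^ (2*k - l)) (j+1)).1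
      ((funext hshift).symm ▸ key)
    have hz : ∑ i ∈ Finset.range (j+1), (((2*i).choose l : ℕ) : ℝ) * b ^ (2*i - l) = 0 := by
      apply Finset.sum_eq_zero
      intro i hi
      rw [Finset.mem_range] at hi
      have : (2*i).choose l = 0 := Nat.choose_eq_zero_of_lt (by omega)
      simp [this]
    rw [hz, add_zero] at this
    have hneg : (-1:ℝ)^l = -1 := Odd.neg_one_pow ⟨j, hj⟩
    rw [hneg]
    convert this using 2
    · rfl
    ring


/-- With `m = (1-μ)²`, `a = (1-μ)ν`, `b = (1-μ)(1-ν)` and `p = (1-ν)δ₀ + νq` on a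
finite abelian group,
`Σ_k m^k p_{2k}(x) = (2(1-b))⁻¹ G_x(a/(1-b)) + (2(1+b))⁻¹ G_x(-a/(1+b))`, where
`p_{2k}(x) = Σ_{l=0}^{2k} C(2k,l)(1-ν)^{2k-l} ν^l q_l(x)` and `G_x(z) = Σ_l q_l(x) z^l`. -/
theorem green_function_two_step {G : Type*} [AddCommGroup G] [Fintype G] [DecidableEq G]
    (q : G → ℝ) (hq0 : ∀ x, 0 ≤ q x) (hq1 : ∑ x, q x = 1)
    (Q : ℕ → G → ℝ)
    (hQ0 : ∀ x, Q 0 x = if x = 0 then 1 else 0)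
    (hQs : ∀ l x, Q (l + 1) x = ∑ y, Q l (x - y) * q y)
    (μ ν : ℝ) (hμ0 : 0 < μ) (hμ1 : μ < 1) (hν0 : 0 < ν) (hν1 : ν ≤ 1) (x : G) :
    (∑' k : ℕ, ((1 - μ) ^ 2) ^ k *
        ∑ l ∈ Finset.range (2 * k + 1),
          ((2 * k).choose l : ℝ) * (1 - ν) ^ (2 * k - l) * ν ^ l * Q l x)
      = (2 * (1 - (1 - μ) * (1 - ν)))⁻¹ *
          (∑' l : ℕ, Q l x * ((1 - μ) * ν / (1 - (1 - μ) * (1 - ν))) ^ l)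
        + (2 * (1 + (1 - μ) * (1 - ν)))⁻¹ *
          (∑' l : ℕ, Q l x * (-((1 - μ) * ν / (1 + (1 - μ) * (1 - ν)))) ^ l) := by
  set b := (1 - μ) * (1 - ν) with hbdef
  set a := (1 - μ) * ν with hadef
  have hμ' : 0 < 1 - μ := by linarith
  have hb0 : 0 ≤ b := mul_nonneg hμ'.le (by linarith)
  have hb1 : b < 1 := by nlinarith
  have ha0 : 0 < a := mul_pos hμ' hν0
  have hab : a + b = 1 - μ := by rw [hadef, hbdef]; ring
  have h1b : 0 < 1 - b := by linarith
  have h1b' : 0 < 1 + b := by linarith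
  have ha1b : a < 1 - b := by linarith
  have ha1 : a < 1 := by nlinarith
  -- Q is a probability distribution at each step
  have key : ∀ l, (∀ y, 0 ≤ Q l y) ∧ (∑ y, Q l y = 1) := by
    intro l
    induction l with
    | zero =>
      refine ⟨fun y => ?_, ?_⟩
      · rw [hQ0]; split <;> norm_num
      · simp [hQ0]
    | succ l ih =>
      refine ⟨fun y => ?_, ?_⟩
      · rw [hQs]
        exact Finset.sum_nonneg fun z _ => mul_nonneg (ih.1 _) (hq0 z)
      · simp only [hQs]
        rw [Finset.sum_comm]
        have hz : ∀ z : G, ∑ y, Q l (y - z) * q z = q z := by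
          intro z
          rw [← Finset.sum_mul]
          have h1 : (∑ y, Q l (y - z)) = 1 := by
            rw [← ih.2]
            exact Fintype.sum_equiv (Equiv.subRight z) _ _ (fun y => rfl)
          rw [h1, one_mul]
        rw [Finset.sum_congr rfl (fun z _ => hz z), hq1]
  have hQnn : ∀ l, 0 ≤ Q l x := fun l => (key l).1 x
  have hQle : ∀ l, Q l x ≤ 1 := by
    intro l
    calc Q l x ≤ ∑ y, Q l y :=
          Finset.single_le_sum (fun i _ => (key l).1 i) (Finset.mem_univ x)
      _ = 1 := (key l).2
  set F : ℕ → ℕ → ℝ :=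
    fun k l => (((2*k).choose l : ℕ) : ℝ) * b ^ (2*k - l) * (a ^ l * Q l x) with hF
  have hF0 : ∀ k l, 0 ≤ F k l := by
    intro k l
    apply mul_nonneg (mul_nonneg (Nat.cast_nonneg _) (pow_nonneg hb0 _))
    exact mul_nonneg (pow_nonneg ha0.le _) (hQnn l)
  have hFvanish : ∀ k, ∀ l ∉ Finset.range (2*k+1), F k l = 0 := by
    intro k l hl
    rw [Finset.mem_range] at hl
    have : (2*k).choose l = 0 := Nat.choose_eq_zero_of_lt (by omega)
    simp [hF, this]
  have step1 : ∀ k, ((1 - μ) ^ 2) ^ k *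
      ∑ l ∈ Finset.range (2 * k + 1),
        ((2 * k).choose l : ℝ) * (1 - ν) ^ (2 * k - l) * ν ^ l * Q l x
      = ∑ l ∈ Finset.range (2*k+1), F k l := by
    intro k
    rw [Finset.mul_sum]
    apply Finset.sum_congr rfl
    intro l hl
    rw [Finset.mem_range] at hl
    have hm : ((1-μ)^2)^k = (1-μ)^(2*k-l) * (1-μ)^l := by
      rw [← pow_add, ← pow_mul]
      congr 1
      omega
    rw [hm, hF]
    simp only [hbdef, hadef, mul_pow]
    ring
  have step2 : ∀ k, ∑ l ∈ Finset.range (2*k+1), F k l = ∑' l, F k l :=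
    fun k => (tsum_eq_sum (hFvanish k)).symm
  have hsumk : ∀ k, Summable (fun l => F k l) :=
    fun k => summable_of_ne_finset_zero (hFvanish k)
  have hgeo : Summable (fun k : ℕ => ((1-μ)^2)^k) := by
    apply summable_geometric_of_lt_one (by positivity)
    nlinarith
  have hbound : ∀ k, ∑' l, F k l ≤ ((1-μ)^2)^k := by
    intro k
    rw [← step2 k]
    have h1 : ∑ l ∈ Finset.range (2*k+1), F k l ≤
        ∑ l ∈ Finset.range (2*k+1), a^l * b^(2*k-l) * ((2*k).choose l : ℝ) := by
      apply Finset.sum_le_sum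
      intro l _
      rw [hF]
      have h2 : (((2*k).choose l : ℕ) : ℝ) * b ^ (2*k - l) * (a ^ l * Q l x)
          ≤ (((2*k).choose l : ℕ) : ℝ) * b ^ (2*k - l) * (a ^ l * 1) := by
        apply mul_le_mul_of_nonneg_left
        · exact mul_le_mul_of_nonneg_left (hQle l) (pow_nonneg ha0.le _)
        · exact mul_nonneg (Nat.cast_nonneg _) (pow_nonneg hb0 _)
      calc (((2*k).choose l : ℕ) : ℝ) * b ^ (2*k - l) * (a ^ l * Q l x)
          ≤ (((2*k).choose l : ℕ) : ℝ) * b ^ (2*k - l) * (a ^ l * 1) := h2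
        _ = a^l * b^(2*k-l) * ((2*k).choose l : ℝ) := by ring
    calc ∑ l ∈ Finset.range (2*k+1), F k l
        ≤ ∑ l ∈ Finset.range (2*k+1), a^l * b^(2*k-l) * ((2*k).choose l : ℝ) := h1
      _ = (a + b)^(2*k) := (add_pow a b (2*k)).symm
      _ = ((1-μ)^2)^k := by rw [hab, ← pow_mul]
  have hsum : Summable (Function.uncurry F) := by
    apply (summable_prod_of_nonneg (fun p => hF0 p.1 p.2)).2
    refine ⟨fun k => hsumk k, ?_⟩
    apply Summable.of_nonneg_of_le (fun k => tsum_nonneg (fun l => hF0 k l)) hbound hgeo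
  have hinner : ∀ l, ∑' k, F k l =
      ((1/2) * (1/(1-b)^(l+1) + (-1:ℝ)^l * (1/(1+b)^(l+1)))) * (a ^ l * Q l x) := by
    intro l
    rw [hF]
    rw [tsum_mul_right]
    rw [(two_step_extract hb0 hb1 l).tsum_eq]
  have hterm : ∀ l, ((1/2) * (1/(1-b)^(l+1) + (-1:ℝ)^l * (1/(1+b)^(l+1)))) * (a ^ l * Q l x)
      = (2 * (1 - b))⁻¹ * (Q l x * (a / (1 - b)) ^ l)
        + (2 * (1 + b))⁻¹ * (Q l x * (-(a / (1 + b))) ^ l) := by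
    intro l
    have hne1 : (1 - b) ≠ 0 := ne_of_gt h1b
    have hne2 : (1 + b) ≠ 0 := ne_of_gt h1b'
    have hnp : (-(a/(1+b)))^l = (-1:ℝ)^l * (a/(1+b))^l := by
      rw [← neg_one_mul, mul_pow]
    rw [hnp, div_pow, div_pow, pow_succ, pow_succ]
    field_simp
  have hrA : Summable (fun l : ℕ => (a / (1-b))^l) :=
    summable_geometric_of_lt_one (div_nonneg ha0.le h1b.le) (by rw [div_lt_one h1b]; exact ha1b)
  have hrB : Summable (fun l : ℕ => (a / (1+b))^l) :=
    summable_geometric_of_lt_one (div_nonneg ha0.le h1b'.le) (by rw [div_lt_one h1b']; linarith)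
  have hsA' : Summable (fun l : ℕ => Q l x * (a / (1 - b)) ^ l) := by
    apply Summable.of_nonneg_of_le
      (fun l => mul_nonneg (hQnn l) (pow_nonneg (div_nonneg ha0.le h1b.le) _))
      (fun l => ?_) hrA
    exact mul_le_of_le_one_left (pow_nonneg (div_nonneg ha0.le h1b.le) l) (hQle l)
  have hsB' : Summable (fun l : ℕ => Q l x * (-(a / (1 + b))) ^ l) := by
    apply Summable.of_norm
    apply Summable.of_nonneg_of_le (fun l => norm_nonneg _) (fun l => ?_) hrB
    rw [Real.norm_eq_abs, abs_mul, abs_pow, abs_neg, abs_of_nonneg (hQnn l),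
      abs_of_nonneg (div_nonneg ha0.le h1b'.le)]
    exact mul_le_of_le_one_left (pow_nonneg (div_nonneg ha0.le h1b'.le) l) (hQle l)
  have hsA := hsA'.mul_left (2 * (1 - b))⁻¹
  have hsB := hsB'.mul_left (2 * (1 + b))⁻¹
  calc (∑' k : ℕ, ((1 - μ) ^ 2) ^ k *
        ∑ l ∈ Finset.range (2 * k + 1),
          ((2 * k).choose l : ℝ) * (1 - ν) ^ (2 * k - l) * ν ^ l * Q l x)
      = ∑' k, ∑' l, F k l := by
        apply tsum_congr; intro k; rw [step1 k, step2 k]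
    _ = ∑' l, ∑' k, F k l := (hsum.tsum_comm).symm
    _ = ∑' l, ((2 * (1 - b))⁻¹ * (Q l x * (a / (1 - b)) ^ l)
        + (2 * (1 + b))⁻¹ * (Q l x * (-(a / (1 + b))) ^ l)) := by
        apply tsum_congr; intro l; rw [hinner l, hterm l]
    _ = (2 * (1 - b))⁻¹ * (∑' l, Q l x * (a / (1 - b)) ^ l)
        + (2 * (1 + b))⁻¹ * (∑' l, Q l x * (-(a / (1 + b))) ^ l) := by
        rw [hsA.tsum_add hsB, tsum_mul_left, tsum_mul_left]
end
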